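/- arXiv:2501.11775 — 2 statements merged into one kernel-verified Lean document; each statement's English description precedes it below -/
import Mathlib

section
/- Let W = {ω_0,…,ω_{n-1}} be a basis of F_{q^n} over F_q with dual basis B = {β_0,…,β_{n-1}} and Moore matrix M_W. For 0 ≤ i ≤ n-1, let c_i be the (i,0)-cofactor of M_W and define T_{W,i}(x) = ∑_{k=0}^{n-1} (-1)^{k(n-1)} c_i^{q^k} x^{(q^k-1)/(q-1)}. Then for every y ∈ F_{q^n}^*, Tr_{F_{q^n}/F_q}(β_i y) = det(M_W)^{-1} · y · T_{W,i}(y^{q-1}). -/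
/-- The Moore matrix of `s`, with `(i,j)` entry `s i ^ q ^ j`, `q = |K|`. -/
def mooreMatrix (K : Type*) [Field K] [Fintype K] {L : Type*} [Field L] {m : ℕ}
    (s : Fin m → L) : Matrix (Fin m) (Fin m) L :=
  Matrix.of fun i j => s i ^ Fintype.card K ^ (j : ℕ)

/-- The `(i,0)`-cofactor of the Moore matrix of `s`. -/
def mooreCof (K : Type*) [Field K] [Fintype K] {L : Type*} [Field L] {n : ℕ}
    (s : Fin (n + 1) → L) (i : Fin (n + 1)) : L :=
  (-1 : L) ^ (i : ℕ) *
    ((mooreMatrix K s).submatrix i.succAbove (Fin.succAbove 0)).det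

/-- The projective polynomial `T_{W,i}(x) = ∑ₖ (-1)^{k(n-1)} cᵢ^{qᵏ} x^{(qᵏ-1)/(q-1)}`,
where here the basis has `n + 1` elements (so the paper's `n - 1` is `n`). -/
def Tproj (K : Type*) [Field K] [Fintype K] {L : Type*} [Field L] {n : ℕ}
    (s : Fin (n + 1) → L) (i : Fin (n + 1)) (x : L) : L :=
  ∑ k : Fin (n + 1), (-1 : L) ^ ((k : ℕ) * n) * mooreCof K s i ^ Fintype.card K ^ (k : ℕ) *
    x ^ ((Fintype.card K ^ (k : ℕ) - 1) / (Fintype.card K - 1))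

/-!
The dual-basis relations say that the Moore matrix of `β` is the inverse transpose of the Moore
matrix `M` of `ω` (the trace being `x ↦ ∑ₖ x ^ q ^ k`), so the adjugate formula gives
`βᵢ = (det M)⁻¹ cᵢ`. The Frobenius permutes the columns of `M` cyclically, whence
`(det M) ^ q ^ k = (-1) ^ (k n) det M`. Expanding `Tr(βᵢ y) = ∑ₖ (βᵢ y) ^ q ^ k` term by term
then gives the formula, since `y ^ q ^ k = y (y ^ (q - 1)) ^ ((q ^ k - 1) / (q - 1))`.
-/

open Matrix

section Moore

variable {K L : Type*} [Field K] [Fintype K] [Field L]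

theorem mooreCof_eq_adjugate {n : ℕ} (s : Fin (n + 1) → L) (i : Fin (n + 1)) :
    mooreCof K s i = (mooreMatrix K s).adjugate 0 i := by
  rw [adjugate_fin_succ_eq_det_submatrix, mooreCof, Fin.val_zero, add_zero]

variable [Algebra K L]

theorem algebraMap_pow_card (c : K) : algebraMap K L c ^ Fintype.card K = algebraMap K L c := by
  rw [← map_pow, FiniteField.pow_card]

variable [Finite L]

theorem pow_card_pow_finrank (x : L) : x ^ Fintype.card K ^ Module.finrank K L = x := by
  have := Fintype.ofFinite L
  rw [← Module.card_eq_pow_finrank, FiniteField.pow_card]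

variable {n : ℕ}

theorem algebraMap_trace_eq_sum_fin (hrank : Module.finrank K L = n + 1) (z : L) :
    algebraMap K L (Algebra.trace K L z) = ∑ k : Fin (n + 1), z ^ Fintype.card K ^ (k : ℕ) := by
  rw [FiniteField.algebraMap_trace_eq_sum_pow, hrank, Fintype.card_eq_nat_card,
    ← Fin.sum_univ_eq_sum_range]

theorem mooreMatrix_map_pow_card (hrank : Module.finrank K L = n + 1) (ω : Fin (n + 1) → L) :
    (mooreMatrix K ω).map (· ^ Fintype.card K) =
      (mooreMatrix K ω).submatrix id (finRotate (n + 1)) := by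
  ext i j
  simp only [map_apply, submatrix_apply, id_eq, mooreMatrix, of_apply,
    ← pow_mul, ← pow_succ, finRotate_apply, Fin.val_add_one]
  split_ifs with h
  · rw [h, Fin.val_last, ← hrank, pow_card_pow_finrank, pow_zero, pow_one]
  · rfl

theorem det_mooreMatrix_pow_card (hrank : Module.finrank K L = n + 1) (ω : Fin (n + 1) → L) :
    (mooreMatrix K ω).det ^ Fintype.card K = (-1) ^ n * (mooreMatrix K ω).det := by
  have h : (mooreMatrix K ω).det ^ Fintype.card K =
      ((mooreMatrix K ω).map (· ^ Fintype.card K)).det :=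
    RingHom.map_det (FiniteField.frobeniusAlgHom K L).toRingHom _
  rw [h, mooreMatrix_map_pow_card hrank, det_permute', sign_finRotate]
  push_cast
  ring

theorem det_mooreMatrix_pow_card_pow (hrank : Module.finrank K L = n + 1) (ω : Fin (n + 1) → L)
    (k : ℕ) :
    (mooreMatrix K ω).det ^ Fintype.card K ^ k = (-1) ^ (k * n) * (mooreMatrix K ω).det := by
  induction k with
  | zero => simp
  | succ k ih =>
    have hsign : ((-1 : L) ^ (k * n)) ^ Fintype.card K = (-1) ^ (k * n) := by
      simpa using algebraMap_pow_card (L := L) ((-1 : K) ^ (k * n))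
    rw [pow_succ, pow_mul, ih, mul_pow, hsign, det_mooreMatrix_pow_card hrank, ← mul_assoc,
      ← pow_add, add_one_mul]

theorem mooreMatrix_mul_transpose_eq_one (hrank : Module.finrank K L = n + 1)
    {ω β : Fin (n + 1) → L}
    (hdual : ∀ i j, Algebra.trace K L (β i * ω j) = if i = j then 1 else 0) :
    mooreMatrix K β * (mooreMatrix K ω)ᵀ = 1 := by
  ext i j
  simp only [mul_apply, transpose_apply, mooreMatrix, of_apply, ← mul_pow,
    ← algebraMap_trace_eq_sum_fin hrank, hdual, one_apply]
  split_ifs <;> simp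

theorem eq_det_inv_mul_mooreCof (hrank : Module.finrank K L = n + 1)
    {ω β : Fin (n + 1) → L}
    (hdual : ∀ i j, Algebra.trace K L (β i * ω j) = if i = j then 1 else 0) (i : Fin (n + 1)) :
    β i = (mooreMatrix K ω).det⁻¹ * mooreCof K ω i := by
  have hinv : ((mooreMatrix K ω)ᵀ)⁻¹ = mooreMatrix K β :=
    inv_eq_left_inv (mooreMatrix_mul_transpose_eq_one hrank hdual)
  calc β i = mooreMatrix K β i 0 := by simp [mooreMatrix]
    _ = (mooreMatrix K ω)⁻¹ 0 i := by rw [← hinv, ← transpose_nonsing_inv, transpose_apply]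
    _ = _ := by
      rw [inv_def, Matrix.smul_apply, Ring.inverse_eq_inv, mooreCof_eq_adjugate, smul_eq_mul]

theorem pow_card_pow_eq_of_dual (hrank : Module.finrank K L = n + 1)
    {ω β : Fin (n + 1) → L}
    (hdual : ∀ i j, Algebra.trace K L (β i * ω j) = if i = j then 1 else 0) (i : Fin (n + 1))
    (k : ℕ) :
    β i ^ Fintype.card K ^ k =
      (-1) ^ (k * n) * (mooreMatrix K ω).det⁻¹ * mooreCof K ω i ^ Fintype.card K ^ k := by
  rw [eq_det_inv_mul_mooreCof hrank hdual, mul_pow, inv_pow, det_mooreMatrix_pow_card_pow hrank,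
    mul_inv, ← inv_pow, inv_neg_one]

end Moore

theorem mul_pow_sub_one_pow_div {M : Type*} [Monoid M] (y : M) {q : ℕ} (hq : 0 < q) (k : ℕ) :
    y * (y ^ (q - 1)) ^ ((q ^ k - 1) / (q - 1)) = y ^ q ^ k := by
  have hdvd : q - 1 ∣ q ^ k - 1 := by simpa using Nat.sub_dvd_pow_sub_pow q 1 k
  rw [← pow_mul, Nat.mul_div_cancel' hdvd, ← pow_succ',
    Nat.sub_add_cancel (Nat.one_le_pow _ _ hq)]

theorem stmt11_general (K L : Type*) [Field K] [Fintype K] [Field L] [Algebra K L]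
    (n : ℕ) (ω β : Fin (n + 1) → L)
    (hω : ∃ b : Module.Basis (Fin (n + 1)) K L, ∀ i, b i = ω i)
    (hdual : ∀ i j, Algebra.trace K L (β i * ω j) = if i = j then 1 else 0) :
    ∀ (i : Fin (n + 1)) (y : L), y ≠ 0 →
      algebraMap K L (Algebra.trace K L (β i * y)) =
        (mooreMatrix K ω).det⁻¹ * y * Tproj K ω i (y ^ (Fintype.card K - 1)) := by
  intro i y _
  obtain ⟨b, -⟩ := hω
  have : Module.Finite K L := .of_basis b
  have : Finite L := Module.finite_of_finite K
  have hrank : Module.finrank K L = n + 1 := by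
    rw [Module.finrank_eq_card_basis b, Fintype.card_fin]
  rw [algebraMap_trace_eq_sum_fin hrank, Tproj, Finset.mul_sum]
  refine Finset.sum_congr rfl fun k _ => ?_
  rw [mul_pow, pow_card_pow_eq_of_dual hrank hdual,
    ← mul_pow_sub_one_pow_div y Fintype.card_pos]
  ring

theorem stmt11 (K L : Type*) [Field K] [Fintype K] [Field L] [Fintype L] [Algebra K L]
    (n : ℕ) (ω β : Fin (n + 1) → L)
    (hω : ∃ b : Module.Basis (Fin (n + 1)) K L, ∀ i, b i = ω i)
    (hβ : ∃ b : Module.Basis (Fin (n + 1)) K L, ∀ i, b i = β i)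
    (hdual : ∀ i j, Algebra.trace K L (β i * ω j) = if i = j then 1 else 0) :
    ∀ (i : Fin (n + 1)) (y : L), y ≠ 0 →
      algebraMap K L (Algebra.trace K L (β i * y)) =
        (mooreMatrix K ω).det⁻¹ * y * Tproj K ω i (y ^ (Fintype.card K - 1)) :=
  stmt11_general K L n ω β hω hdual
end

section
/- With notation as above, for any y ∈ F_{q^n}^* and x = y^{q-1}, one has T_{W,j}(x)^q = (-1)^{n-1} x^{-1} T_{W,j}(x) for each 0 ≤ j ≤ n-1. -/
/-! Substituting `x = y^{q-1}` turns `T_{W,j}(x)` into `y⁻¹ ∑ₖ (-1)^{kn} (c y)^{qᵏ}` with `c`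
the cofactor. Since `L` has `q^{n+1}` elements, `a ↦ a^q` is additive and shifts the terms of this
sum cyclically along the orbit `a, a^q, …, a^{q^n}`, the sign `(-1)^{kn}` picking up a factor
`(-1)^n` at each step; hence the sum is multiplied by `(-1)^n`, and `(y⁻¹)^q = y⁻¹ x⁻¹`. -/

open Finset

theorem pow_sub_one_pow_div_sub_one {M : Type*} [Monoid M] (y : M) (q k : ℕ) :
    (y ^ (q - 1)) ^ ((q ^ k - 1) / (q - 1)) = y ^ (q ^ k - 1) := by
  rw [← pow_mul, Nat.mul_div_cancel' (by simpa using Nat.sub_dvd_pow_sub_pow q 1 k)]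

section FrobeniusOrbit

variable {K R : Type*} [Field K] [Fintype K] [CommRing R] [Algebra K R]

theorem neg_one_pow_card : (-1 : R) ^ Fintype.card K = -1 := by
  simpa using map_neg (FiniteField.frobeniusAlgHom K R) 1

theorem sum_neg_one_pow_mul_pow_card_pow_pow_card {n : ℕ} {a : R}
    (ha : a ^ Fintype.card K ^ (n + 1) = a) :
    (∑ k ∈ range (n + 1), (-1 : R) ^ (k * n) * a ^ Fintype.card K ^ k) ^ Fintype.card K =
      (-1) ^ n * ∑ k ∈ range (n + 1), (-1 : R) ^ (k * n) * a ^ Fintype.card K ^ k := by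
  set q := Fintype.card K
  set u : ℕ → R := fun k => (-1) ^ (k * n) * a ^ q ^ k
  have hneg : (-1 : R) ^ q = -1 := neg_one_pow_card
  have hshift (k : ℕ) : u k ^ q = (-1) ^ n * u (k + 1) := by
    have hsign : (-1 : R) ^ (k * n) = (-1) ^ n * (-1) ^ ((k + 1) * n) := by
      rw [← pow_add, show n + (k + 1) * n = k * n + 2 * n by ring, pow_add, pow_mul]
      simp
    rw [mul_pow, ← pow_mul a, ← pow_succ, pow_right_comm, hneg, hsign, mul_assoc]
  have hcycle : u (n + 1) = u 0 := by
    simp only [u, ha, mul_comm (n + 1) n, (Nat.even_mul_succ_self n).neg_one_pow, zero_mul,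
      pow_zero, pow_one, one_mul]
  calc (∑ k ∈ range (n + 1), u k) ^ q
      = ∑ k ∈ range (n + 1), u k ^ q := map_sum (FiniteField.frobeniusAlgHom K R) u _
    _ = (-1) ^ n * ∑ k ∈ range (n + 1), u (k + 1) := by simp only [hshift, mul_sum]
    _ = (-1) ^ n * ∑ k ∈ range (n + 1), u k := by
      rw [sum_range_succ, hcycle, ← sum_range_succ' u n]

end FrobeniusOrbit

theorem Tproj_pow_card_sub_one {K L : Type*} [Field K] [Fintype K] [Field L] {n : ℕ}
    (s : Fin (n + 1) → L) (i : Fin (n + 1)) {y : L} (hy : y ≠ 0) :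
    Tproj K s i (y ^ (Fintype.card K - 1)) =
      y⁻¹ * ∑ k ∈ range (n + 1),
        (-1 : L) ^ (k * n) * (mooreCof K s i * y) ^ Fintype.card K ^ k := by
  rw [Tproj, mul_sum, ← Fin.sum_univ_eq_sum_range]
  refine sum_congr rfl fun k _ => ?_
  rw [pow_sub_one_pow_div_sub_one, pow_sub₀ y hy (Nat.one_le_pow _ _ Fintype.card_pos), pow_one,
    mul_pow]
  ring

theorem stmt13 (K L : Type*) [Field K] [Fintype K] [Field L] [Fintype L] [Algebra K L]
    (n : ℕ) (ω : Fin (n + 1) → L)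
    (hω : ∃ b : Module.Basis (Fin (n + 1)) K L, ∀ i, b i = ω i) :
    ∀ (j : Fin (n + 1)) (y : L), y ≠ 0 →
      Tproj K ω j (y ^ (Fintype.card K - 1)) ^ Fintype.card K =
        (-1 : L) ^ n * (y ^ (Fintype.card K - 1))⁻¹ *
          Tproj K ω j (y ^ (Fintype.card K - 1)) := by
  obtain ⟨b, -⟩ := hω
  intro j y hy
  have horbit (a : L) : a ^ Fintype.card K ^ (n + 1) = a := by
    rw [← Fintype.card_fin (n + 1), ← Module.card_fintype b]
    exact FiniteField.pow_card a
  have hy_pow : y ^ Fintype.card K = y * y ^ (Fintype.card K - 1) := by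
    rw [← pow_succ', Nat.sub_add_cancel Fintype.card_pos]
  rw [Tproj_pow_card_sub_one _ _ hy, mul_pow, sum_neg_one_pow_mul_pow_card_pow_pow_card (horbit _),
    inv_pow, hy_pow, mul_inv]
  ring
end
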